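/- arXiv:1901.00838 — 2 statements merged into one kernel-verified Lean document; each statement's English description precedes it below -/
import Mathlib

section
/- Let J be the real matrix !![1, 1; -1, -1/10]. Then for every real λ > 0, every eigenvalue of the matrix J + λ·(Jᵀ * J) has strictly positive real part. -/
/-!
A real 2 × 2 matrix with positive trace `t` and positive determinant `d` has all its eigenvalues
in the open right half-plane: they are the roots of `z² - t z + d`, so either they are a
conjugate pair with real part `t / 2`, or they are real, and a real root `x ≤ 0` is impossible
since then `x² - t x + d ≥ d > 0`. For `J + λ JᵀJ` the trace is `9/10 + 301/100 λ` and the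
determinant is `9/10 + 81/100 λ + 81/100 λ²`.
-/

open Matrix Polynomial

theorem Complex.re_pos_of_sq_sub_mul_add_eq_zero {t d : ℝ} (ht : 0 < t) (hd : 0 < d) {z : ℂ}
    (hz : z ^ 2 - t * z + d = 0) : 0 < z.re := by
  have hre : z.re ^ 2 - z.im ^ 2 - t * z.re + d = 0 := by
    simpa [sq] using congrArg Complex.re hz
  have him : z.im * (2 * z.re - t) = 0 := by
    have him' := congrArg Complex.im hz
    simp only [sq, sub_im, add_im, mul_im, ofReal_re, ofReal_im, zero_mul, add_zero,
      zero_im] at him'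
    linear_combination him'
  rcases mul_eq_zero.mp him with hreal | hhalf
  · rw [hreal] at hre
    by_contra! hnonpos
    nlinarith [mul_nonpos_of_nonneg_of_nonpos ht.le hnonpos]
  · linarith

theorem Matrix.re_pos_of_mem_spectrum_map_ofReal {A : Matrix (Fin 2) (Fin 2) ℝ}
    (htr : 0 < A.trace) (hdet : 0 < A.det) {μ : ℂ}
    (hμ : μ ∈ spectrum ℂ (A.map Complex.ofReal)) : 0 < μ.re := by
  rw [mem_spectrum_iff_isRoot_charpoly,
    show A.map Complex.ofReal = A.map Complex.ofRealHom from rfl, charpoly_map,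
    charpoly_fin_two] at hμ
  refine Complex.re_pos_of_sq_sub_mul_add_eq_zero htr hdet ?_
  simpa using hμ

local notation "J" => (!![1, 1; -1, -1/10] : Matrix (Fin 2) (Fin 2) ℝ)

theorem trace_consensus_jacobian (lam : ℝ) :
    (J + lam • (Jᵀ * J)).trace = 9 / 10 + 301 / 100 * lam := by
  simp only [trace_add, trace_smul, trace_fin_two, Fin.isValue, of_apply, cons_val',
    cons_val_zero, cons_val_fin_one, cons_val_one, mul_apply, transpose_apply, Fin.sum_univ_two,
    smul_eq_mul]
  ring

theorem det_consensus_jacobian (lam : ℝ) :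
    (J + lam • (Jᵀ * J)).det = 9 / 10 + 81 / 100 * lam + 81 / 100 * lam ^ 2 := by
  simp only [det_fin_two, Fin.isValue, Matrix.add_apply, Matrix.smul_apply, of_apply, cons_val',
    cons_val_zero, cons_val_fin_one, cons_val_one, mul_apply, transpose_apply, Fin.sum_univ_two,
    smul_eq_mul]
  ring

/-- Appendix B: consensus optimization converges to the non-Nash equilibrium of the
counterexample game for every choice of the hyperparameter `λ > 0`. -/
theorem stmt_7 :
    ∀ lam : ℝ, 0 < lam →
      ∀ μ ∈ spectrum ℂ
          ((((!![1, 1; -1, -1/10] : Matrix (Fin 2) (Fin 2) ℝ) +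
            lam • ((!![1, 1; -1, -1/10] : Matrix (Fin 2) (Fin 2) ℝ)ᵀ *
              (!![1, 1; -1, -1/10] : Matrix (Fin 2) (Fin 2) ℝ)))).map Complex.ofReal),
        0 < μ.re := by
  intro lam hlam μ hμ
  refine Matrix.re_pos_of_mem_spectrum_map_ofReal ?_ ?_ hμ
  · rw [trace_consensus_jacobian]
    positivity
  · rw [det_consensus_jacobian]
    positivity
end

section
/- Under the stated assumptions on ω, J, λ, let g : ℝ^d → ℝ be continuously differentiable with g(z) = 1 whenever ω(z) = 0, and define the damped adjusted vector field h_g(z) = (1/2)(ω(z) + g(z)·Jᵀ(z)(Jᵀ(z)J(z) + λ(z)I)⁻¹ Jᵀ(z) ω(z)). Let z* ∈ ℝ^d satisfy ω(z*) = 0 and suppose J(z*) is invertible. Then h_g is differentiable at z* and the Jacobian matrix of h_g at z* equals (1/2)(J(z*) + Jᵀ(z*)); in particular it is symmetric and all of its eigenvalues are real. -/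
/-!
The damped field is `½ (ω + B ω)` with `B z = g z • Jᵀ (JᵀJ + λI)⁻¹ Jᵀ`. Since `ω` vanishes
at `z*`, the product rule there needs only continuity of `B`, not its differentiability, and
gives the derivative `B(z*) J(z*)`. At `z*` we have `λ = 0` and `g = 1`, so
`B(z*) J(z*) = Jᵀ (JᵀJ)⁻¹ JᵀJ = Jᵀ`, and the Jacobian is `½ (J + Jᵀ)`, a real symmetric
matrix, hence with real spectrum.
-/

open Matrix Topology Asymptotics

section Calculus

variable {𝕜 E F G : Type*} [NontriviallyNormedField 𝕜] [NormedAddCommGroup E] [NormedSpace 𝕜 E]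
  [NormedAddCommGroup F] [NormedSpace 𝕜 F] [NormedAddCommGroup G] [NormedSpace 𝕜 G]

theorem HasFDerivAt.clm_apply_of_eq_zero {B : E → F →L[𝕜] G} {f : E → F} {f' : E →L[𝕜] F}
    {x : E} (hB : ContinuousAt B x) (hf : HasFDerivAt f f' x) (hfx : f x = 0) :
    HasFDerivAt (fun z => B z (f z)) ((B x).comp f') x := by
  refine .of_isLittleO ?_
  have hsplit : (fun z => B z (f z) - B x (f x) - (B x).comp f' (z - x)) =
      fun z => B z (f z - f x - f' (z - x)) + (B z - B x) (f' (z - x)) := by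
    funext z
    simp only [hfx, map_sub, ContinuousLinearMap.comp_apply, _root_.sub_apply, map_zero]
    abel
  rw [hsplit, ← isLittleO_norm_right]
  refine .add ?_ ?_
  · refine isBoundedBilinearMap_apply.isBigO_comp.trans_isLittleO ?_
    simpa using (hB.isBigO_one ℝ).norm_left.mul_isLittleO hf.isLittleO.norm_left.norm_right
  · have hsmall : (fun z => B z - B x) =o[𝓝 x] (fun _ => (1 : ℝ)) :=
      (isLittleO_one_iff ℝ).2 (tendsto_sub_nhds_zero_iff.2 hB)
    refine isBoundedBilinearMap_apply.isBigO_comp.trans_isLittleO ?_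
    simpa using hsmall.norm_left.mul_isBigO (f'.isBigO_sub (𝓝 x) x).norm_left.norm_right

variable {m n : Type*} [Fintype m] [Fintype n] [CompleteSpace 𝕜]

theorem HasFDerivAt.matrix_mulVec_of_eq_zero {B : E → Matrix m n 𝕜} {f : E → n → 𝕜}
    {f' : E →L[𝕜] n → 𝕜} {x : E} (hB : ContinuousAt B x) (hf : HasFDerivAt f f' x)
    (hfx : f x = 0) :
    HasFDerivAt (fun z => B z *ᵥ f z) ((B x).mulVecLin.toContinuousLinearMap.comp f') x := by
  classical
  have hcont : Continuous fun M : Matrix m n 𝕜 => M.mulVecLin.toContinuousLinearMap :=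
    LinearMap.continuous_of_finiteDimensional
      (LinearMap.toContinuousLinearMap.toLinearMap ∘ₗ Matrix.toLin'.toLinearMap :
        Matrix m n 𝕜 →ₗ[𝕜] (n → 𝕜) →L[𝕜] m → 𝕜)
  exact hf.clm_apply_of_eq_zero (hcont.continuousAt.comp hB) hfx

theorem continuous_of_hasFDerivAt_mulVecLin [DecidableEq n] {f : (n → 𝕜) → m → 𝕜}
    {J : (n → 𝕜) → Matrix m n 𝕜} (hf : ContDiff 𝕜 1 f)
    (hJ : ∀ z, HasFDerivAt f (J z).mulVecLin.toContinuousLinearMap z) : Continuous J := by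
  have hentry : J = fun z i j => fderiv 𝕜 f z (Pi.single j 1) i := by
    ext z i j
    simp [(hJ z).fderiv]
  rw [hentry]
  exact continuous_matrix fun i j =>
    (continuous_apply i).comp ((hf.continuous_fderiv one_ne_zero).clm_apply continuous_const)

end Calculus

section Adjustment

variable {n : Type*} [Fintype n] [DecidableEq n]

noncomputable def adjustmentMatrix (J : Matrix n n ℝ) (lam : ℝ) : Matrix n n ℝ :=
  Jᵀ * (Jᵀ * J + lam • (1 : Matrix n n ℝ))⁻¹ * Jᵀ

theorem adjustmentMatrix_zero_mul {J : Matrix n n ℝ} (hJ : IsUnit (Jᵀ * J)) :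
    adjustmentMatrix J 0 * J = Jᵀ := by
  rw [adjustmentMatrix, zero_smul, add_zero, Matrix.mul_assoc, Matrix.mul_assoc,
    nonsing_inv_mul _ ((isUnit_iff_isUnit_det _).mp hJ), Matrix.mul_one]

theorem Continuous.continuousAt_adjustmentMatrix {X : Type*} [TopologicalSpace X]
    {J : X → Matrix n n ℝ} {lam : X → ℝ} {x : X} (hJ : Continuous J) (hlam : Continuous lam)
    (hinv : IsUnit ((J x)ᵀ * J x + lam x • (1 : Matrix n n ℝ))) :
    ContinuousAt (fun z => adjustmentMatrix (J z) (lam z)) x := by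
  have hM : Continuous fun z => (J z)ᵀ * J z + lam z • (1 : Matrix n n ℝ) :=
    (hJ.matrix_transpose.matrix_mul hJ).add (hlam.smul continuous_const)
  have hdet := (isUnit_iff_isUnit_det _).mp hinv
  have hMinv := (continuousAt_matrix_inv _ (NormedRing.inverse_continuousAt hdet.unit)).comp
    (x := x) hM.continuousAt
  exact (hJ.matrix_transpose.continuousAt.mul hMinv).mul hJ.matrix_transpose.continuousAt

end Adjustment

open scoped Matrix.Norms.L2Operator in
theorem Matrix.IsSymm.im_eq_zero_of_mem_spectrum_map {n : Type*} [Fintype n] [DecidableEq n]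
    {A : Matrix n n ℝ} (hA : A.IsSymm) {μ : ℂ} (hμ : μ ∈ spectrum ℂ (A.map Complex.ofReal)) :
    μ.im = 0 :=
  have hH : (A.map Complex.ofReal).IsHermitian :=
    (isHermitian_iff_isSymm.mpr hA).map _ fun x => (Complex.conj_ofReal x).symm
  hH.isSelfAdjoint.im_eq_zero_of_mem_spectrum hμ

theorem stmt_14_general {d : ℕ}
    (ω : (Fin d → ℝ) → (Fin d → ℝ))
    (J : (Fin d → ℝ) → Matrix (Fin d) (Fin d) ℝ)
    (lam : (Fin d → ℝ) → ℝ)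
    (hω : ContDiff ℝ 2 ω)
    (hJ : ∀ z, HasFDerivAt ω (LinearMap.toContinuousLinearMap (Matrix.mulVecLin (J z))) z)
    (hlamC1 : ContDiff ℝ 1 lam)
    (hlam_zero : ∀ z, lam z = 0 ↔ ω z = 0)
    (hinv : ∀ z, IsUnit ((J z)ᵀ * J z + lam z • (1 : Matrix (Fin d) (Fin d) ℝ)))
    (g : (Fin d → ℝ) → ℝ)
    (hgC1 : ContDiff ℝ 1 g)
    (hg1 : ∀ z, ω z = 0 → g z = 1)
    (hg : (Fin d → ℝ) → (Fin d → ℝ))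
    (hgdef : ∀ z, hg z = (1 / 2 : ℝ) •
      (ω z + g z • ((J z)ᵀ).mulVec
        ((((J z)ᵀ * J z + lam z • (1 : Matrix (Fin d) (Fin d) ℝ))⁻¹).mulVec
          (((J z)ᵀ).mulVec (ω z)))))
    (zs : Fin d → ℝ)
    (hcrit : ω zs = 0) :
    HasFDerivAt hg
      (LinearMap.toContinuousLinearMap
        (Matrix.mulVecLin ((1 / 2 : ℝ) • (J zs + (J zs)ᵀ)))) zs ∧
    ((1 / 2 : ℝ) • (J zs + (J zs)ᵀ)).IsSymm ∧
    (∀ μ ∈ spectrum ℂ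
        (((1 / 2 : ℝ) • (J zs + (J zs)ᵀ)).map Complex.ofReal), μ.im = 0) := by
  set B := fun z => g z • adjustmentMatrix (J z) (lam z)
  have hgB : hg = fun z => (1 / 2 : ℝ) • (ω z + B z *ᵥ ω z) := by
    funext z
    simp only [hgdef, B, adjustmentMatrix, smul_mulVec, mulVec_mulVec, Matrix.mul_assoc]
  have hBJ : B zs * J zs = (J zs)ᵀ := by
    have hlam0 : lam zs = 0 := (hlam_zero zs).2 hcrit
    have hgram := hinv zs
    rw [hlam0, zero_smul, add_zero] at hgram
    simp only [B, hlam0, hg1 zs hcrit, one_smul, adjustmentMatrix_zero_mul hgram]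
  have hJcont : Continuous J := continuous_of_hasFDerivAt_mulVecLin (hω.of_le (by norm_num)) hJ
  have hBcont : ContinuousAt B zs := hgC1.continuous.continuousAt.smul <|
    hJcont.continuousAt_adjustmentMatrix hlamC1.continuous (hinv zs)
  have hsym : ((1 / 2 : ℝ) • (J zs + (J zs)ᵀ)).IsSymm := by
    simp only [IsSymm, transpose_smul, transpose_add, transpose_transpose, add_comm]
  refine ⟨?_, hsym, fun μ hμ => hsym.im_eq_zero_of_mem_spectrum_map hμ⟩
  rw [hgB]
  refine (((hJ zs).add ((hJ zs).matrix_mulVec_of_eq_zero hBcont hcrit)).const_smul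
    (1 / 2 : ℝ)).congr_fderiv ?_
  ext v i
  simp [← hBJ]

/-- End of Section 3: damping the adjustment term by a function `g` with `g(z) = 1` at
critical points of `ω` does not change the Jacobian of the adjusted field at a critical
point `z*`: it is still the symmetric matrix `(1/2)(J(z*) + J(z*)ᵀ)`, with real
eigenvalues. -/
theorem stmt_14 {d : ℕ}
    (ω : (Fin d → ℝ) → (Fin d → ℝ))
    (J : (Fin d → ℝ) → Matrix (Fin d) (Fin d) ℝ)
    (lam : (Fin d → ℝ) → ℝ)
    (hω : ContDiff ℝ 2 ω)
    (hJ : ∀ z, HasFDerivAt ω (LinearMap.toContinuousLinearMap (Matrix.mulVecLin (J z))) z)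
    (hlamC1 : ContDiff ℝ 1 lam)
    (hlam_nonneg : ∀ z, 0 ≤ lam z)
    (hlam_zero : ∀ z, lam z = 0 ↔ ω z = 0)
    (hinv : ∀ z, IsUnit ((J z)ᵀ * J z + lam z • (1 : Matrix (Fin d) (Fin d) ℝ)))
    (g : (Fin d → ℝ) → ℝ)
    (hgC1 : ContDiff ℝ 1 g)
    (hg1 : ∀ z, ω z = 0 → g z = 1)
    (hg : (Fin d → ℝ) → (Fin d → ℝ))
    (hgdef : ∀ z, hg z = (1 / 2 : ℝ) •
      (ω z + g z • ((J z)ᵀ).mulVec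
        ((((J z)ᵀ * J z + lam z • (1 : Matrix (Fin d) (Fin d) ℝ))⁻¹).mulVec
          (((J z)ᵀ).mulVec (ω z)))))
    (zs : Fin d → ℝ)
    (hcrit : ω zs = 0)
    (hJinv : IsUnit (J zs)) :
    HasFDerivAt hg
      (LinearMap.toContinuousLinearMap
        (Matrix.mulVecLin ((1 / 2 : ℝ) • (J zs + (J zs)ᵀ)))) zs ∧
    ((1 / 2 : ℝ) • (J zs + (J zs)ᵀ)).IsSymm ∧
    (∀ μ ∈ spectrum ℂ
        (((1 / 2 : ℝ) • (J zs + (J zs)ᵀ)).map Complex.ofReal), μ.im = 0) :=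
  stmt_14_general ω J lam hω hJ hlamC1 hlam_zero hinv g hgC1 hg1 hg hgdef zs hcrit
end
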